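/- (Metric Galilean case: reduced torsion and contorsion decomposition.) Assume the duality relations hold on U and that the connection is metric with respect to the Galilean structure: ∇_μ τ_ν = 0 and ∇_α h^{μν} = 0 at every point. Define the Galilean reduced torsion T̂^α_{μν} := T^α_{μν} − 2 v^α ω_{μν}. Then at every point of U: (i) τ_α T̂^α_{μν} = 0 for all μ, ν; and (ii) Γ^α_{μν} − ^{v,τ}Γ^α_{μν} = −(1/2)(γ_{σμ} T̂^σ_{νκ} + γ_{σν} T̂^σ_{μκ}) h^{κα} + (1/2) T̂^α_{μν} + v^α ω_{μν} + (τ_μ κ_{νβ} + τ_ν κ_{μβ}) h^{αβ}, where κ_{μν} := (1/2)(γ_{να} ∇_μ v^α − γ_{μα} ∇_ν v^α). -/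

import Mathlib

/-! Common setup: fields on an open subset `U` of `ℝ⁴`, coordinates indexed by `Fin 4`,
partial derivatives `pd`, covariant derivatives, torsion, the intrinsic objects
`ω`, `Θ`, the compatible connection `^{v,τ}Γ` and the Coriolis field. -/

abbrev Vec4 : Type := Fin 4 → ℝ
abbrev Tens1 : Type := Vec4 → Fin 4 → ℝ
abbrev Tens2 : Type := Vec4 → Fin 4 → Fin 4 → ℝ
abbrev Tens3 : Type := Vec4 → Fin 4 → Fin 4 → Fin 4 → ℝ

/-- μ-th partial derivative -/
noncomputable def pd (μ : Fin 4) (f : Vec4 → ℝ) (x : Vec4) : ℝ :=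
  fderiv ℝ f x (Pi.single μ 1)

/-- ∇_μ τ_ν := ∂_μ τ_ν − Γ^σ_{μν} τ_σ -/
noncomputable def covOne (Γ : Tens3) (τ : Tens1) (x : Vec4) (μ ν : Fin 4) : ℝ :=
  pd μ (fun y => τ y ν) x - ∑ σ, Γ x σ μ ν * τ x σ

/-- ∇_μ v^ν := ∂_μ v^ν + Γ^ν_{μσ} v^σ -/
noncomputable def covVec (Γ : Tens3) (v : Tens1) (x : Vec4) (μ ν : Fin 4) : ℝ :=
  pd μ (fun y => v y ν) x + ∑ σ, Γ x ν μ σ * v x σ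

/-- ∇_α γ_{μν} := ∂_α γ_{μν} − Γ^σ_{αμ} γ_{σν} − Γ^σ_{αν} γ_{μσ} -/
noncomputable def covLow (Γ : Tens3) (γ : Tens2) (x : Vec4) (α μ ν : Fin 4) : ℝ :=
  pd α (fun y => γ y μ ν) x - ∑ σ, Γ x σ α μ * γ x σ ν - ∑ σ, Γ x σ α ν * γ x μ σ

/-- ∇_α h^{μν} := ∂_α h^{μν} + Γ^μ_{ασ} h^{σν} + Γ^ν_{ασ} h^{μσ} -/
noncomputable def covUp (Γ : Tens3) (h : Tens2) (x : Vec4) (α μ ν : Fin 4) : ℝ :=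
  pd α (fun y => h y μ ν) x + ∑ σ, Γ x μ α σ * h x σ ν + ∑ σ, Γ x ν α σ * h x μ σ

/-- Torsion T^α_{μν} := Γ^α_{μν} − Γ^α_{νμ} -/
def torsion (Γ : Tens3) (x : Vec4) (α μ ν : Fin 4) : ℝ :=
  Γ x α μ ν - Γ x α ν μ

/-- ω_{μν} := (1/2)(∂_μ τ_ν − ∂_ν τ_μ) -/
noncomputable def omega2 (τ : Tens1) (x : Vec4) (μ ν : Fin 4) : ℝ :=
  (1/2) * (pd μ (fun y => τ y ν) x - pd ν (fun y => τ y μ) x)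

/-- Θ_{μν} := (1/2)(v^σ ∂_σ γ_{μν} + γ_{σν} ∂_μ v^σ + γ_{μσ} ∂_ν v^σ) -/
noncomputable def theta2 (v : Tens1) (γ : Tens2) (x : Vec4) (μ ν : Fin 4) : ℝ :=
  (1/2) * (∑ σ, v x σ * pd σ (fun y => γ y μ ν) x
    + ∑ σ, γ x σ ν * pd μ (fun y => v y σ) x
    + ∑ σ, γ x μ σ * pd ν (fun y => v y σ) x)

/-- The compatible connection ^{v,τ}Γ^α_{μν} -/
noncomputable def compatConn (v τ : Tens1) (γ h : Tens2) : Tens3 := fun x α μ ν =>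
  ∑ σ, h x α σ * ((1/2) * pd μ (fun y => γ y ν σ) x + (1/2) * pd ν (fun y => γ y μ σ) x
    - (1/2) * pd σ (fun y => γ y μ ν) x)
  + (1/2) * v x α * (pd μ (fun y => τ y ν) x + pd ν (fun y => τ y μ) x)

/-- Coriolis field κ_{μν} := (1/2)(γ_{να} ∇_μ v^α − γ_{μα} ∇_ν v^α) -/
noncomputable def coriolis (Γ : Tens3) (v : Tens1) (γ : Tens2) (x : Vec4) (μ ν : Fin 4) : ℝ :=
  (1/2) * (∑ α, γ x ν α * covVec Γ v x μ α - ∑ α, γ x μ α * covVec Γ v x ν α)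

/-- Smoothness of a rank-1 field on U -/
def Smooth1 (τ : Tens1) (U : Set Vec4) : Prop := ∀ ν, ContDiffOn ℝ (⊤ : ℕ∞) (fun x => τ x ν) U
/-- Smoothness of a rank-2 field on U -/
def Smooth2 (γ : Tens2) (U : Set Vec4) : Prop := ∀ μ ν, ContDiffOn ℝ (⊤ : ℕ∞) (fun x => γ x μ ν) U
/-- Smoothness of connection coefficients on U -/
def Smooth3 (Γ : Tens3) (U : Set Vec4) : Prop := ∀ α μ ν, ContDiffOn ℝ (⊤ : ℕ∞) (fun x => Γ x α μ ν) U

/-- Kronecker delta -/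
def kron (μ ν : Fin 4) : ℝ := if μ = ν then 1 else 0

/-- The duality relations: τ_μ v^μ = 1, h^{μν} τ_ν = 0, γ_{μν} v^ν = 0,
h^{μσ} γ_{σν} = δ^μ_ν − v^μ τ_ν, together with symmetry of γ and h. -/
def DualityOn (τ v : Tens1) (γ h : Tens2) (U : Set Vec4) : Prop :=
  ∀ x ∈ U, (∀ μ ν, γ x μ ν = γ x ν μ) ∧ (∀ μ ν, h x μ ν = h x ν μ) ∧
    (∑ μ, τ x μ * v x μ = 1) ∧
    (∀ μ, ∑ ν, h x μ ν * τ x ν = 0) ∧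
    (∀ μ, ∑ ν, γ x μ ν * v x ν = 0) ∧
    (∀ μ ν, ∑ σ, h x μ σ * γ x σ ν = kron μ ν - v x μ * τ x ν)

/-- Galilean reduced torsion T̂^α_{μν} := T^α_{μν} − 2 v^α ω_{μν}. -/
noncomputable def galReducedTorsion (Γ : Tens3) (v τ : Tens1) (x : Vec4) (α μ ν : Fin 4) : ℝ :=
  torsion Γ x α μ ν - 2 * v x α * omega2 τ x μ ν

/-- Galilean contorsion K̂^α_{μν} := −T̂_{(μν)}{}^α + (1/2) T̂^α_{μν}, indices moved by γ, h. -/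
noncomputable def galContorsion (Γ : Tens3) (v τ : Tens1) (γ h : Tens2)
    (x : Vec4) (α μ ν : Fin 4) : ℝ :=
  -(1/2) * ∑ κ, (∑ σ, (γ x σ μ * galReducedTorsion Γ v τ x σ ν κ
      + γ x σ ν * galReducedTorsion Γ v τ x σ μ κ)) * h x κ α
  + (1/2) * galReducedTorsion Γ v τ x α μ ν


section Helpers

open Filter

lemma pd_congr_nhds {U : Set Vec4} (hU : IsOpen U) {x : Vec4} (hx : x ∈ U)
    {f g : Vec4 → ℝ} (hfg : ∀ y ∈ U, f y = g y) (μ : Fin 4) : pd μ f x = pd μ g x := by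
  unfold pd
  rw [Filter.EventuallyEq.fderiv_eq (Filter.eventuallyEq_of_mem (hU.mem_nhds hx) hfg)]

lemma pd_mul {f g : Vec4 → ℝ} {x : Vec4} (hf : DifferentiableAt ℝ f x)
    (hg : DifferentiableAt ℝ g x) (μ : Fin 4) :
    pd μ (fun y => f y * g y) x = pd μ f x * g x + f x * pd μ g x := by
  unfold pd; rw [fderiv_fun_mul hf hg]; simp; ring

lemma pd_sum {x : Vec4} (f : Fin 4 → Vec4 → ℝ) (hf : ∀ i, DifferentiableAt ℝ (f i) x) (μ : Fin 4) :
    pd μ (fun y => ∑ i, f i y) x = ∑ i, pd μ (f i) x := by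
  unfold pd; rw [fderiv_fun_sum (fun i _ => hf i)]; simp

lemma pd_const (c : ℝ) (x : Vec4) (μ : Fin 4) : pd μ (fun _ => c) x = 0 := by
  unfold pd; simp

lemma pd_const_sub {f : Vec4 → ℝ} {x : Vec4} (hf : DifferentiableAt ℝ f x) (c : ℝ) (μ : Fin 4) :
    pd μ (fun y => c - f y) x = - pd μ f x := by
  unfold pd; rw [fderiv_fun_sub (differentiableAt_const c) hf]; simp

lemma sum4_kron_l (f : Fin 4 → ℝ) (m : Fin 4) : ∑ σ, kron σ m * f σ = f m := by
  simp [kron, Finset.sum_ite_eq, Finset.sum_ite_eq']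

lemma sum4_kron_r (f : Fin 4 → ℝ) (m : Fin 4) : ∑ σ, kron m σ * f σ = f m := by
  simp [kron, Finset.sum_ite_eq, Finset.sum_ite_eq']

lemma negsub_mul (f g : Fin 4 → ℝ) (c : ℝ) :
    (-(∑ ρ, f ρ) - ∑ ρ, g ρ) * c = (0 - ∑ ρ, f ρ * c) - ∑ ρ, g ρ * c := by
  rw [show (-(∑ ρ, f ρ) - ∑ ρ, g ρ) * c = 0 - (∑ ρ, f ρ) * c - (∑ ρ, g ρ) * c from by ring,
    Finset.sum_mul, Finset.sum_mul]

end Helpers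

/-- Metric Galilean case: the reduced torsion satisfies `τ_α T̂^α_{μν} = 0` and the connection
decomposes as `Γ − ^{v,τ}Γ = K̂^α_{μν} + v^α ω_{μν} + 2 τ_{(μ} κ_{ν)β} h^{αβ}`. -/
theorem metric_galilean_contorsion_decomposition
    (U : Set Vec4) (hU : IsOpen U) (hne : U.Nonempty)
    (τ v : Tens1) (γ h : Tens2) (Γ : Tens3)
    (hτs : Smooth1 τ U) (hvs : Smooth1 v U) (hγs : Smooth2 γ U) (hhs : Smooth2 h U)
    (hΓs : Smooth3 Γ U)
    (hdual : DualityOn τ v γ h U)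
    (hmetτ : ∀ x ∈ U, ∀ μ ν, covOne Γ τ x μ ν = 0)
    (hmeth : ∀ x ∈ U, ∀ α μ ν, covUp Γ h x α μ ν = 0) :
    ∀ x ∈ U,
      (∀ μ ν, ∑ α, τ x α * galReducedTorsion Γ v τ x α μ ν = 0) ∧
      (∀ α μ ν,
        Γ x α μ ν - compatConn v τ γ h x α μ ν
          = galContorsion Γ v τ γ h x α μ ν
            + v x α * omega2 τ x μ ν
            + ∑ β, (τ x μ * coriolis Γ v γ x ν β
                + τ x ν * coriolis Γ v γ x μ β) * h x α β) := by
  intro x hx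
  obtain ⟨γsym, hsym, τv, hτ0, γv0, hγd⟩ := hdual x hx
  have dτ : ∀ ν, DifferentiableAt ℝ (fun y => τ y ν) x :=
    fun ν => ((hτs ν).contDiffAt (hU.mem_nhds hx)).differentiableAt (by simp)
  have dv : ∀ ν, DifferentiableAt ℝ (fun y => v y ν) x :=
    fun ν => ((hvs ν).contDiffAt (hU.mem_nhds hx)).differentiableAt (by simp)
  have dγ : ∀ μ ν, DifferentiableAt ℝ (fun y => γ y μ ν) x :=
    fun μ ν => ((hγs μ ν).contDiffAt (hU.mem_nhds hx)).differentiableAt (by simp)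
  have dh : ∀ μ ν, DifferentiableAt ℝ (fun y => h y μ ν) x :=
    fun μ ν => ((hhs μ ν).contDiffAt (hU.mem_nhds hx)).differentiableAt (by simp)
  -- metricity, rearranged
  have F1 : ∀ μ ν, pd μ (fun y => τ y ν) x = ∑ σ, Γ x σ μ ν * τ x σ := by
    intro μ ν; have e := hmetτ x hx μ ν; unfold covOne at e; linarith
  have F2 : ∀ α μ ν, pd α (fun y => h y μ ν) x
      = -(∑ σ, Γ x μ α σ * h x σ ν) - ∑ σ, Γ x ν α σ * h x μ σ := by
    intro α μ ν; have e := hmeth x hx α μ ν; unfold covUp at e; linarith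
  -- differentiated duality relations
  have Eq1 : ∀ α μ ν,
      (∑ σ, (pd α (fun y => h y μ σ) x * γ x σ ν + h x μ σ * pd α (fun y => γ y σ ν) x))
      = -(pd α (fun y => v y μ) x * τ x ν + v x μ * pd α (fun y => τ y ν) x) := by
    intro α μ ν
    have e := pd_congr_nhds hU hx (f := fun y => ∑ σ, h y μ σ * γ y σ ν)
      (g := fun y => kron μ ν - v y μ * τ y ν)
      (fun y hy => (hdual y hy).2.2.2.2.2 μ ν) α
    have eL : pd α (fun y => ∑ σ, h y μ σ * γ y σ ν) x
        = ∑ σ, pd α (fun y => h y μ σ * γ y σ ν) x :=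
      pd_sum (fun σ y => h y μ σ * γ y σ ν) (fun σ => (dh μ σ).mul (dγ σ ν)) α
    have eR : pd α (fun y => kron μ ν - v y μ * τ y ν) x
        = -(pd α (fun y => v y μ * τ y ν) x) := pd_const_sub ((dv μ).mul (dτ ν)) _ α
    have eM : pd α (fun y => v y μ * τ y ν) x
        = pd α (fun y => v y μ) x * τ x ν + v x μ * pd α (fun y => τ y ν) x :=
      pd_mul (dv μ) (dτ ν) α
    calc ∑ σ, (pd α (fun y => h y μ σ) x * γ x σ ν + h x μ σ * pd α (fun y => γ y σ ν) x)
        = ∑ σ, pd α (fun y => h y μ σ * γ y σ ν) x :=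
          Finset.sum_congr rfl fun σ _ => (pd_mul (dh μ σ) (dγ σ ν) α).symm
      _ = pd α (fun y => kron μ ν - v y μ * τ y ν) x := by rw [← eL, e]
      _ = _ := by rw [eR, eM]
  have Eq2 : ∀ α μ,
      (∑ ν, (pd α (fun y => γ y μ ν) x * v x ν + γ x μ ν * pd α (fun y => v y ν) x)) = 0 := by
    intro α μ
    have e := pd_congr_nhds hU hx (f := fun y => ∑ ν, γ y μ ν * v y ν)
      (g := fun _ => (0:ℝ)) (fun y hy => (hdual y hy).2.2.2.2.1 μ) α
    have eL : pd α (fun y => ∑ ν, γ y μ ν * v y ν) x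
        = ∑ ν, pd α (fun y => γ y μ ν * v y ν) x :=
      pd_sum (fun ν y => γ y μ ν * v y ν) (fun ν => (dγ μ ν).mul (dv ν)) α
    calc ∑ ν, (pd α (fun y => γ y μ ν) x * v x ν + γ x μ ν * pd α (fun y => v y ν) x)
        = ∑ ν, pd α (fun y => γ y μ ν * v y ν) x :=
          Finset.sum_congr rfl fun ν _ => (pd_mul (dγ μ ν) (dv ν) α).symm
      _ = 0 := by rw [← eL, e, pd_const]
  have Dγsym : ∀ α μ ν, pd α (fun y => γ y μ ν) x = pd α (fun y => γ y ν μ) x :=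
    fun α μ ν => pd_congr_nhds hU hx (fun y hy => (hdual y hy).1 μ ν) α
  -- completeness, flipped
  have comp : ∀ σ m, (∑ κ, γ x m κ * h x κ σ) = kron σ m - v x σ * τ x m := by
    intro σ m
    rw [← hγd σ m]
    exact Finset.sum_congr rfl fun κ _ => by rw [γsym m κ, hsym κ σ]; ring
  -- h-contraction of ∂γ
  have key : ∀ a k n, ∑ σ, h x k σ * pd a (fun y => γ y σ n) x
      = Γ x k a n - v x k * pd a (fun y => τ y n) x - τ x n * covVec Γ v x a k
        + ∑ ρ, h x k ρ * (∑ σ, γ x n σ * Γ x σ a ρ) := by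
    intro a k n
    have e1 := Eq1 a k n
    rw [Finset.sum_add_distrib] at e1
    have e2 : ∑ σ, pd a (fun y => h y k σ) x * γ x σ n
        = -(Γ x k a n) + τ x n * (∑ ρ, Γ x k a ρ * v x ρ)
          - ∑ ρ, h x k ρ * (∑ σ, γ x n σ * Γ x σ a ρ) := by
      calc ∑ σ, pd a (fun y => h y k σ) x * γ x σ n
          = ∑ σ, ((0 - ∑ ρ, Γ x k a ρ * h x ρ σ * γ x σ n)
              - ∑ ρ, Γ x σ a ρ * h x k ρ * γ x σ n) := by
            refine Finset.sum_congr rfl fun σ _ => ?_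
            rw [F2 a k σ, negsub_mul]
        _ = (0 - ∑ σ, ∑ ρ, Γ x k a ρ * h x ρ σ * γ x σ n)
              - ∑ σ, ∑ ρ, Γ x σ a ρ * h x k ρ * γ x σ n := by
            rw [Finset.sum_sub_distrib, Finset.sum_sub_distrib, Finset.sum_const_zero]
        _ = (0 - ∑ ρ, Γ x k a ρ * (∑ σ, h x ρ σ * γ x σ n))
              - ∑ ρ, h x k ρ * (∑ σ, γ x n σ * Γ x σ a ρ) := by
            congr 1
            · congr 1
              rw [Finset.sum_comm]
              exact Finset.sum_congr rfl fun ρ _ => by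
                rw [Finset.mul_sum]
                exact Finset.sum_congr rfl fun σ _ => by ring
            · rw [Finset.sum_comm]
              exact Finset.sum_congr rfl fun ρ _ => by
                rw [Finset.mul_sum]
                exact Finset.sum_congr rfl fun σ _ => by rw [γsym n σ]; ring
        _ = (0 - ∑ ρ, Γ x k a ρ * (kron ρ n - v x ρ * τ x n))
              - ∑ ρ, h x k ρ * (∑ σ, γ x n σ * Γ x σ a ρ) := by
            congr 2
            exact Finset.sum_congr rfl fun ρ _ => by rw [hγd ρ n]
        _ = _ := by
            have e3 : ∑ ρ, Γ x k a ρ * (kron ρ n - v x ρ * τ x n)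
                = Γ x k a n - (∑ ρ, Γ x k a ρ * v x ρ) * τ x n := by
              calc ∑ ρ, Γ x k a ρ * (kron ρ n - v x ρ * τ x n)
                  = ∑ ρ, (kron ρ n * Γ x k a ρ - Γ x k a ρ * v x ρ * τ x n) :=
                    Finset.sum_congr rfl fun ρ _ => by ring
                _ = (∑ ρ, kron ρ n * Γ x k a ρ) - ∑ ρ, Γ x k a ρ * v x ρ * τ x n :=
                    Finset.sum_sub_distrib _ _
                _ = Γ x k a n - (∑ ρ, Γ x k a ρ * v x ρ) * τ x n := by
                    rw [sum4_kron_l, Finset.sum_mul]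
            rw [e3]; ring
    simp only [covVec]
    linear_combination e1 - e2
  have step3 : ∀ a n, ∑ σ, v x σ * pd a (fun y => γ y σ n) x
      = -(∑ σ, γ x n σ * pd a (fun y => v y σ) x) := by
    intro a n
    have e := Eq2 a n
    rw [Finset.sum_add_distrib] at e
    have e4 : ∑ σ, v x σ * pd a (fun y => γ y σ n) x
        = ∑ σ, pd a (fun y => γ y n σ) x * v x σ :=
      Finset.sum_congr rfl fun σ _ => by rw [Dγsym a n σ]; ring
    linarith [e, e4]
  -- the formula for ∂γ
  have F5 : ∀ a m n, pd a (fun y => γ y m n) x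
      = ∑ κ, γ x m κ * Γ x κ a n + ∑ κ, γ x n κ * Γ x κ a m
        - τ x m * (∑ κ, γ x n κ * covVec Γ v x a κ)
        - τ x n * (∑ κ, γ x m κ * covVec Γ v x a κ) := by
    intro a m n
    have c1 : ∑ σ, (∑ κ, γ x m κ * h x κ σ) * pd a (fun y => γ y σ n) x
        = ∑ κ, γ x m κ * (∑ σ, h x κ σ * pd a (fun y => γ y σ n) x) := by
      calc ∑ σ, (∑ κ, γ x m κ * h x κ σ) * pd a (fun y => γ y σ n) x
          = ∑ σ, ∑ κ, γ x m κ * (h x κ σ * pd a (fun y => γ y σ n) x) := by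
            refine Finset.sum_congr rfl fun σ _ => ?_
            rw [Finset.sum_mul]
            exact Finset.sum_congr rfl fun κ _ => by ring
        _ = ∑ κ, ∑ σ, γ x m κ * (h x κ σ * pd a (fun y => γ y σ n) x) := Finset.sum_comm
        _ = ∑ κ, γ x m κ * (∑ σ, h x κ σ * pd a (fun y => γ y σ n) x) :=
            Finset.sum_congr rfl fun κ _ => (Finset.mul_sum _ _ _).symm
    have c2 : ∑ σ, (∑ κ, γ x m κ * h x κ σ) * pd a (fun y => γ y σ n) x
        = pd a (fun y => γ y m n) x - τ x m * ∑ σ, v x σ * pd a (fun y => γ y σ n) x := by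
      calc ∑ σ, (∑ κ, γ x m κ * h x κ σ) * pd a (fun y => γ y σ n) x
          = ∑ σ, (kron σ m * pd a (fun y => γ y σ n) x
              - τ x m * (v x σ * pd a (fun y => γ y σ n) x)) := by
            refine Finset.sum_congr rfl fun σ _ => ?_
            rw [comp σ m]; ring
        _ = (∑ σ, kron σ m * pd a (fun y => γ y σ n) x)
            - ∑ σ, τ x m * (v x σ * pd a (fun y => γ y σ n) x) := Finset.sum_sub_distrib _ _
        _ = pd a (fun y => γ y m n) x - τ x m * ∑ σ, v x σ * pd a (fun y => γ y σ n) x := by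
            rw [sum4_kron_l, ← Finset.mul_sum]
    have s1 : pd a (fun y => γ y m n) x
        = ∑ κ, γ x m κ * (∑ σ, h x κ σ * pd a (fun y => γ y σ n) x)
          + τ x m * (∑ σ, v x σ * pd a (fun y => γ y σ n) x) := by linarith [c1, c2]
    have s2 : ∑ κ, γ x m κ * (∑ σ, h x κ σ * pd a (fun y => γ y σ n) x)
        = ∑ κ, γ x m κ * Γ x κ a n
          - (∑ κ, γ x m κ * v x κ) * pd a (fun y => τ y n) x
          - τ x n * (∑ κ, γ x m κ * covVec Γ v x a κ)
          + ∑ κ, γ x m κ * (∑ ρ, h x κ ρ * (∑ σ, γ x n σ * Γ x σ a ρ)) := by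
      calc ∑ κ, γ x m κ * (∑ σ, h x κ σ * pd a (fun y => γ y σ n) x)
          = ∑ κ, (γ x m κ * Γ x κ a n
              - γ x m κ * v x κ * pd a (fun y => τ y n) x
              - τ x n * (γ x m κ * covVec Γ v x a κ)
              + γ x m κ * (∑ ρ, h x κ ρ * (∑ σ, γ x n σ * Γ x σ a ρ))) := by
            refine Finset.sum_congr rfl fun κ _ => ?_
            rw [key a κ n]; ring
        _ = _ := by
            rw [Finset.sum_add_distrib, Finset.sum_sub_distrib, Finset.sum_sub_distrib,
              ← Finset.sum_mul, ← Finset.mul_sum]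
    have s4 : ∑ κ, γ x m κ * (∑ ρ, h x κ ρ * (∑ σ, γ x n σ * Γ x σ a ρ))
        = (∑ σ, γ x n σ * Γ x σ a m)
          - τ x m * (∑ ρ, v x ρ * (∑ σ, γ x n σ * Γ x σ a ρ)) := by
      calc ∑ κ, γ x m κ * (∑ ρ, h x κ ρ * (∑ σ, γ x n σ * Γ x σ a ρ))
          = ∑ κ, ∑ ρ, γ x m κ * h x κ ρ * (∑ σ, γ x n σ * Γ x σ a ρ) := by
            refine Finset.sum_congr rfl fun κ _ => ?_
            rw [Finset.mul_sum]
            exact Finset.sum_congr rfl fun ρ _ => by ring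
        _ = ∑ ρ, ∑ κ, γ x m κ * h x κ ρ * (∑ σ, γ x n σ * Γ x σ a ρ) := Finset.sum_comm
        _ = ∑ ρ, (∑ κ, γ x m κ * h x κ ρ) * (∑ σ, γ x n σ * Γ x σ a ρ) :=
            Finset.sum_congr rfl fun ρ _ => (Finset.sum_mul _ _ _).symm
        _ = ∑ ρ, (kron ρ m * (∑ σ, γ x n σ * Γ x σ a ρ)
              - τ x m * (v x ρ * (∑ σ, γ x n σ * Γ x σ a ρ))) := by
            refine Finset.sum_congr rfl fun ρ _ => ?_
            rw [comp ρ m]; ring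
        _ = _ := by
            rw [Finset.sum_sub_distrib, sum4_kron_l, ← Finset.mul_sum]
    have s5 : (∑ ρ, v x ρ * (∑ σ, γ x n σ * Γ x σ a ρ))
          + ∑ σ, γ x n σ * pd a (fun y => v y σ) x
        = ∑ κ, γ x n κ * covVec Γ v x a κ := by
      have c5 : ∑ ρ, v x ρ * (∑ σ, γ x n σ * Γ x σ a ρ)
          = ∑ σ, γ x n σ * (∑ ρ, Γ x σ a ρ * v x ρ) := by
        calc ∑ ρ, v x ρ * (∑ σ, γ x n σ * Γ x σ a ρ)
            = ∑ ρ, ∑ σ, γ x n σ * (Γ x σ a ρ * v x ρ) := by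
              refine Finset.sum_congr rfl fun ρ _ => ?_
              rw [Finset.mul_sum]
              exact Finset.sum_congr rfl fun σ _ => by ring
          _ = ∑ σ, ∑ ρ, γ x n σ * (Γ x σ a ρ * v x ρ) := Finset.sum_comm
          _ = ∑ σ, γ x n σ * (∑ ρ, Γ x σ a ρ * v x ρ) :=
              Finset.sum_congr rfl fun σ _ => (Finset.mul_sum _ _ _).symm
      rw [c5, ← Finset.sum_add_distrib]
      refine Finset.sum_congr rfl fun σ _ => ?_
      simp only [covVec]; ring
    rw [s1, step3 a n, s2, γv0 m, s4]
    linear_combination (-(τ x m)) * s5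
  -- part (i)
  have part1 : ∀ μ ν, ∑ α, τ x α * galReducedTorsion Γ v τ x α μ ν = 0 := by
    intro μ ν
    have e : ∑ α, τ x α * galReducedTorsion Γ v τ x α μ ν
        = ∑ α, (Γ x α μ ν * τ x α - Γ x α ν μ * τ x α
            - 2 * omega2 τ x μ ν * (τ x α * v x α)) :=
      Finset.sum_congr rfl fun α _ => by simp only [galReducedTorsion, torsion]; ring
    rw [e, Finset.sum_sub_distrib, Finset.sum_sub_distrib, ← Finset.mul_sum, τv,
      ← F1 μ ν, ← F1 ν μ]
    simp only [omega2]; ring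
  -- lowering the reduced torsion
  have lT : ∀ m n k, ∑ σ, γ x σ m * galReducedTorsion Γ v τ x σ n k
      = ∑ σ, γ x m σ * (Γ x σ n k - Γ x σ k n) := by
    intro m n k
    calc ∑ σ, γ x σ m * galReducedTorsion Γ v τ x σ n k
        = ∑ σ, (γ x m σ * (Γ x σ n k - Γ x σ k n)
            - 2 * omega2 τ x n k * (γ x m σ * v x σ)) := by
          refine Finset.sum_congr rfl fun σ _ => ?_
          simp only [galReducedTorsion, torsion]
          rw [γsym m σ]; ring
      _ = (∑ σ, γ x m σ * (Γ x σ n k - Γ x σ k n))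
          - 2 * omega2 τ x n k * (∑ σ, γ x m σ * v x σ) := by
          rw [Finset.sum_sub_distrib, ← Finset.mul_sum]
      _ = ∑ σ, γ x m σ * (Γ x σ n k - Γ x σ k n) := by rw [γv0 m]; ring
  -- contraction helpers
  have hcontr : ∀ (α : Fin 4) (c : Fin 4 → ℝ),
      ∑ σ, h x α σ * (∑ κ, γ x σ κ * c κ) = c α - v x α * (∑ κ, τ x κ * c κ) := by
    intro α c
    calc ∑ σ, h x α σ * (∑ κ, γ x σ κ * c κ)
        = ∑ σ, ∑ κ, h x α σ * γ x σ κ * c κ := by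
          refine Finset.sum_congr rfl fun σ _ => ?_
          rw [Finset.mul_sum]
          exact Finset.sum_congr rfl fun κ _ => by ring
      _ = ∑ κ, ∑ σ, h x α σ * γ x σ κ * c κ := Finset.sum_comm
      _ = ∑ κ, (∑ σ, h x α σ * γ x σ κ) * c κ :=
          Finset.sum_congr rfl fun κ _ => (Finset.sum_mul _ _ _).symm
      _ = ∑ κ, (kron α κ * c κ - v x α * (τ x κ * c κ)) := by
          refine Finset.sum_congr rfl fun κ _ => ?_
          rw [hγd α κ]; ring
      _ = c α - v x α * (∑ κ, τ x κ * c κ) := by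
          rw [Finset.sum_sub_distrib, sum4_kron_r, ← Finset.mul_sum]
  have tsub : ∀ m p q, ∑ κ, γ x m κ * (Γ x κ p q - Γ x κ q p)
      = (∑ κ, γ x m κ * Γ x κ p q) - ∑ κ, γ x m κ * Γ x κ q p := by
    intro m p q
    rw [← Finset.sum_sub_distrib]
    exact Finset.sum_congr rfl fun κ _ => by ring
  have tadd : ∀ p q σ, ∑ κ, γ x σ κ * ((1/2) * (Γ x κ p q + Γ x κ q p))
      = (1/2) * (∑ κ, γ x σ κ * Γ x κ p q) + (1/2) * (∑ κ, γ x σ κ * Γ x κ q p) := by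
    intro p q σ
    calc ∑ κ, γ x σ κ * ((1/2) * (Γ x κ p q + Γ x κ q p))
        = ∑ κ, ((1/2) * (γ x σ κ * Γ x κ p q) + (1/2) * (γ x σ κ * Γ x κ q p)) :=
          Finset.sum_congr rfl fun κ _ => by ring
      _ = _ := by rw [Finset.sum_add_distrib, ← Finset.mul_sum, ← Finset.mul_sum]
  -- evaluation of the compatible connection
  have compat_eval : ∀ α μ ν, compatConn v τ γ h x α μ ν
      = (1/2) * (Γ x α μ ν + Γ x α ν μ)
        + (1/2) * (∑ σ, h x α σ * (∑ κ, γ x ν κ * (Γ x κ μ σ - Γ x κ σ μ)))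
        + (1/2) * (∑ σ, h x α σ * (∑ κ, γ x μ κ * (Γ x κ ν σ - Γ x κ σ ν)))
        - ∑ σ, h x α σ * (τ x μ * coriolis Γ v γ x ν σ)
        - ∑ σ, h x α σ * (τ x ν * coriolis Γ v γ x μ σ) := by
    intro α μ ν
    have e0 : ∑ σ, h x α σ * ((1/2) * pd μ (fun y => γ y ν σ) x
          + (1/2) * pd ν (fun y => γ y μ σ) x - (1/2) * pd σ (fun y => γ y μ ν) x)
        = ∑ σ, ((1/2) * (h x α σ * (∑ κ, γ x ν κ * (Γ x κ μ σ - Γ x κ σ μ)))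
            + (1/2) * (h x α σ * (∑ κ, γ x μ κ * (Γ x κ ν σ - Γ x κ σ ν)))
            + h x α σ * (∑ κ, γ x σ κ * ((1/2) * (Γ x κ μ ν + Γ x κ ν μ)))
            - h x α σ * (τ x μ * coriolis Γ v γ x ν σ)
            - h x α σ * (τ x ν * coriolis Γ v γ x μ σ)
            - h x α σ * (τ x σ * ((1/2) * ((∑ κ, γ x ν κ * covVec Γ v x μ κ)
                + ∑ κ, γ x μ κ * covVec Γ v x ν κ)))) := by
      refine Finset.sum_congr rfl fun σ _ => ?_
      rw [F5 μ ν σ, F5 ν μ σ, F5 σ μ ν, tsub ν μ σ, tsub μ ν σ, tadd μ ν σ]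
      simp only [coriolis]
      ring
    have c3 : ∑ σ, h x α σ * (∑ κ, γ x σ κ * ((1/2) * (Γ x κ μ ν + Γ x κ ν μ)))
        = (1/2) * (Γ x α μ ν + Γ x α ν μ)
          - v x α * (∑ κ, τ x κ * ((1/2) * (Γ x κ μ ν + Γ x κ ν μ))) :=
      hcontr α (fun κ => (1/2) * (Γ x κ μ ν + Γ x κ ν μ))
    have c6 : ∑ σ, h x α σ * (τ x σ * ((1/2) * ((∑ κ, γ x ν κ * covVec Γ v x μ κ)
          + ∑ κ, γ x μ κ * covVec Γ v x ν κ))) = 0 := by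
      calc ∑ σ, h x α σ * (τ x σ * ((1/2) * ((∑ κ, γ x ν κ * covVec Γ v x μ κ)
            + ∑ κ, γ x μ κ * covVec Γ v x ν κ)))
          = (∑ σ, h x α σ * τ x σ) * ((1/2) * ((∑ κ, γ x ν κ * covVec Γ v x μ κ)
            + ∑ κ, γ x μ κ * covVec Γ v x ν κ)) := by
            rw [Finset.sum_mul]
            exact Finset.sum_congr rfl fun σ _ => by ring
        _ = 0 := by rw [hτ0 α]; ring
    have cF1 : ∑ κ, τ x κ * ((1/2) * (Γ x κ μ ν + Γ x κ ν μ))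
        = (1/2) * (pd μ (fun y => τ y ν) x + pd ν (fun y => τ y μ) x) := by
      rw [F1 μ ν, F1 ν μ]
      rw [show (1/2) * ((∑ σ, Γ x σ μ ν * τ x σ) + ∑ σ, Γ x σ ν μ * τ x σ)
          = (∑ σ, (1/2) * (Γ x σ μ ν * τ x σ)) + ∑ σ, (1/2) * (Γ x σ ν μ * τ x σ) from by
        rw [← Finset.mul_sum, ← Finset.mul_sum]; ring]
      rw [← Finset.sum_add_distrib]
      exact Finset.sum_congr rfl fun κ _ => by ring
    calc compatConn v τ γ h x α μ ν
        = (∑ σ, h x α σ * ((1/2) * pd μ (fun y => γ y ν σ) x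
            + (1/2) * pd ν (fun y => γ y μ σ) x - (1/2) * pd σ (fun y => γ y μ ν) x))
          + (1/2) * v x α * (pd μ (fun y => τ y ν) x + pd ν (fun y => τ y μ) x) := rfl
      _ = _ := by
          rw [e0]
          simp only [Finset.sum_add_distrib, Finset.sum_sub_distrib, ← Finset.mul_sum]
          rw [c3, c6, cF1]
          ring
  refine ⟨part1, ?_⟩
  intro α μ ν
  have hA : ∑ κ, (∑ σ, (γ x σ μ * galReducedTorsion Γ v τ x σ ν κ
        + γ x σ ν * galReducedTorsion Γ v τ x σ μ κ)) * h x κ α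
      = (∑ σ, h x α σ * (∑ κ, γ x μ κ * (Γ x κ ν σ - Γ x κ σ ν)))
        + ∑ σ, h x α σ * (∑ κ, γ x ν κ * (Γ x κ μ σ - Γ x κ σ μ)) := by
    rw [← Finset.sum_add_distrib]
    refine Finset.sum_congr rfl fun κ _ => ?_
    rw [Finset.sum_add_distrib, lT μ ν κ, lT ν μ κ, hsym κ α]
    ring
  have hC : ∑ β, (τ x μ * coriolis Γ v γ x ν β + τ x ν * coriolis Γ v γ x μ β) * h x α β
      = (∑ σ, h x α σ * (τ x μ * coriolis Γ v γ x ν σ))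
        + ∑ σ, h x α σ * (τ x ν * coriolis Γ v γ x μ σ) := by
    rw [← Finset.sum_add_distrib]
    exact Finset.sum_congr rfl fun β _ => by ring
  rw [compat_eval α μ ν]
  simp only [galContorsion]
  rw [hA, hC]
  simp only [galReducedTorsion, torsion, omega2]
  ring
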